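/- arXiv:1903.04029 — 2 statements merged into one kernel-verified Lean document; each statement's English description precedes it below -/
import Mathlib

section
/- Let Ω ⊂ ℝ^d (d = 2 or d = 3) be a bounded open set. There exists a constant M > 0, depending only on Ω, such that for all smooth vector fields u, v, w : ℝ^d → ℝ^d with compact support contained in Ω, the explicitly skew-symmetric trilinear form satisfies |b*(u, v, w)| ≤ M · ‖u‖_{L²(Ω)}^{1/2} · ‖∇u‖_{L²(Ω)}^{1/2} · ‖∇v‖_{L²(Ω)} · ‖∇w‖_{L²(Ω)}. -/
open MeasureTheory

/-- `∂_j u_i` at `x`: the `i`-th component of the directional derivative of `u`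
in the `j`-th coordinate direction. -/
noncomputable def partialDeriv' {d : ℕ}
    (u : EuclideanSpace ℝ (Fin d) → EuclideanSpace ℝ (Fin d))
    (x : EuclideanSpace ℝ (Fin d)) (i j : Fin d) : ℝ :=
  fderiv ℝ u x (EuclideanSpace.single j 1) i

/-- The convective term `(w · ∇u)_i := ∑ j, w_j ∂_j u_i`. -/
noncomputable def convTerm {d : ℕ}
    (w u : EuclideanSpace ℝ (Fin d) → EuclideanSpace ℝ (Fin d))
    (x : EuclideanSpace ℝ (Fin d)) (i : Fin d) : ℝ :=
  ∑ j, w x j * partialDeriv' u x i j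

/-- The `L²(Ω)` pairing `(f, g) := ∫_Ω f · g dx`. -/
noncomputable def pairL2 {d : ℕ} (Ω : Set (EuclideanSpace ℝ (Fin d)))
    (f g : EuclideanSpace ℝ (Fin d) → Fin d → ℝ) : ℝ :=
  ∫ x in Ω, ∑ i, f x i * g x i

/-- The explicitly skew-symmetric trilinear form
`b*(w, u, v) := (1/2)(w·∇u, v) − (1/2)(w·∇v, u)`. -/
noncomputable def bStar {d : ℕ} (Ω : Set (EuclideanSpace ℝ (Fin d)))
    (w u v : EuclideanSpace ℝ (Fin d) → EuclideanSpace ℝ (Fin d)) : ℝ :=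
  (1 / 2) * pairL2 Ω (convTerm w u) (fun x i => v x i)
    - (1 / 2) * pairL2 Ω (convTerm w v) (fun x i => u x i)

/-- `‖u‖_{L²(Ω)} := (∑ i, ∫_Ω |u_i|² dx)^{1/2}`. -/
noncomputable def normL2 {d : ℕ} (Ω : Set (EuclideanSpace ℝ (Fin d)))
    (u : EuclideanSpace ℝ (Fin d) → EuclideanSpace ℝ (Fin d)) : ℝ :=
  Real.sqrt (∑ i, ∫ x in Ω, (u x i) ^ 2)

/-- `‖∇u‖_{L²(Ω)} := (∑ i j, ∫_Ω |∂_j u_i|² dx)^{1/2}`. -/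
noncomputable def gradNormL2 {d : ℕ} (Ω : Set (EuclideanSpace ℝ (Fin d)))
    (u : EuclideanSpace ℝ (Fin d) → EuclideanSpace ℝ (Fin d)) : ℝ :=
  Real.sqrt (∑ i, ∑ j, ∫ x in Ω, (partialDeriv' u x i j) ^ 2)



namespace BStarAux

open ENNReal
open scoped NNReal

/-! ### Elementary Cauchy–Schwarz lemmas -/

lemma cs_sum {ι : Type*} [Fintype ι] (f g : ι → ℝ) :
    ∑ i, |f i| * |g i| ≤ Real.sqrt (∑ i, f i ^ 2) * Real.sqrt (∑ i, g i ^ 2) := by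
  have h := Finset.sum_mul_sq_le_sq_mul_sq Finset.univ (fun i => |f i|) (fun i => |g i|)
  have h0 : 0 ≤ ∑ i, |f i| * |g i| := by positivity
  calc ∑ i, |f i| * |g i| = Real.sqrt ((∑ i, |f i| * |g i|) ^ 2) := (Real.sqrt_sq h0).symm
    _ ≤ Real.sqrt ((∑ i, |f i| ^ 2) * ∑ i, |g i| ^ 2) := Real.sqrt_le_sqrt h
    _ = _ := by rw [Real.sqrt_mul (by positivity)]; simp [sq_abs]

lemma opnorm_le {d : ℕ} (T : EuclideanSpace ℝ (Fin d) →L[ℝ] EuclideanSpace ℝ (Fin d)) :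
    ‖T‖ ≤ Real.sqrt (∑ i, ∑ j, (T (EuclideanSpace.single j 1) i) ^ 2) := by
  refine T.opNorm_le_bound (by positivity) (fun y => ?_)
  have hy : y = ∑ j, y j • EuclideanSpace.single j (1:ℝ) := by
    ext k; rw [WithLp.ofLp_sum, Finset.sum_apply]; simp [EuclideanSpace.single_apply]
  calc ‖T y‖ = ‖∑ j, y j • T (EuclideanSpace.single j 1)‖ := by
        conv_lhs => rw [hy]
        rw [map_sum]; simp
    _ ≤ ∑ j, ‖y j • T (EuclideanSpace.single j 1)‖ := norm_sum_le _ _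
    _ = ∑ j, |y j| * ‖T (EuclideanSpace.single j 1)‖ := by simp [norm_smul]
    _ = ∑ j, |y j| * |‖T (EuclideanSpace.single j 1)‖| := by
        simp [abs_of_nonneg (norm_nonneg _)]
    _ ≤ Real.sqrt (∑ j, y j ^ 2) * Real.sqrt (∑ j, ‖T (EuclideanSpace.single j 1)‖ ^ 2) :=
        cs_sum _ _
    _ = Real.sqrt (∑ i, ∑ j, (T (EuclideanSpace.single j 1) i) ^ 2) * ‖y‖ := by
        rw [mul_comm]
        congr 1
        · congr 1
          rw [Finset.sum_comm]
          refine Finset.sum_congr rfl fun j _ => ?_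
          rw [EuclideanSpace.norm_eq]
          rw [Real.sq_sqrt (by positivity)]
          simp [sq_abs]
        · rw [EuclideanSpace.norm_eq]; congr 1; simp [sq_abs]

/-- The pointwise Frobenius norm of the gradient. -/
noncomputable def Dg {d : ℕ} (u : EuclideanSpace ℝ (Fin d) → EuclideanSpace ℝ (Fin d))
    (x : EuclideanSpace ℝ (Fin d)) : ℝ :=
  Real.sqrt (∑ i, ∑ j, partialDeriv' u x i j ^ 2)

/-- Pointwise Cauchy–Schwarz bound for the convective integrand. -/
lemma conv_pointwise {d : ℕ} (u v w : EuclideanSpace ℝ (Fin d) → EuclideanSpace ℝ (Fin d))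
    (x : EuclideanSpace ℝ (Fin d)) :
    |∑ i, convTerm u v x i * w x i| ≤ ‖u x‖ * Dg v x * ‖w x‖ := by
  have hnorm : ∀ y : EuclideanSpace ℝ (Fin d), ‖y‖ = Real.sqrt (∑ i, y i ^ 2) := by
    intro y; rw [EuclideanSpace.norm_eq]; congr 1; simp [sq_abs]
  have h1 : ∀ i, |convTerm u v x i| ≤ ‖u x‖ * Real.sqrt (∑ j, partialDeriv' v x i j ^ 2) := by
    intro i
    calc |convTerm u v x i| ≤ ∑ j, |u x j| * |partialDeriv' v x i j| := by
          rw [convTerm]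
          refine (Finset.abs_sum_le_sum_abs _ _).trans ?_
          simp [abs_mul, le_refl]
      _ ≤ Real.sqrt (∑ j, u x j ^ 2) * Real.sqrt (∑ j, partialDeriv' v x i j ^ 2) := cs_sum _ _
      _ = _ := by rw [hnorm]
  calc |∑ i, convTerm u v x i * w x i| ≤ ∑ i, |convTerm u v x i| * |w x i| := by
        refine (Finset.abs_sum_le_sum_abs _ _).trans ?_
        simp [abs_mul, le_refl]
    _ ≤ ∑ i, (‖u x‖ * Real.sqrt (∑ j, partialDeriv' v x i j ^ 2)) * |w x i| := by
        refine Finset.sum_le_sum fun i _ => ?_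
        exact mul_le_mul_of_nonneg_right (h1 i) (abs_nonneg _)
    _ = ‖u x‖ * ∑ i, Real.sqrt (∑ j, partialDeriv' v x i j ^ 2) * |w x i| := by
        rw [Finset.mul_sum]
        exact Finset.sum_congr rfl fun i _ => by ring
    _ ≤ ‖u x‖ * (Real.sqrt (∑ i, ∑ j, partialDeriv' v x i j ^ 2) * ‖w x‖) := by
        refine mul_le_mul_of_nonneg_left ?_ (norm_nonneg _)
        have := cs_sum (fun i => Real.sqrt (∑ j, partialDeriv' v x i j ^ 2)) (fun i => w x i)
        simp only [abs_of_nonneg (Real.sqrt_nonneg _)] at this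
        refine this.trans ?_
        rw [hnorm]
        have hsq : ∀ i : Fin d, Real.sqrt (∑ j, partialDeriv' v x i j ^ 2) ^ 2
            = ∑ j, partialDeriv' v x i j ^ 2 := fun i => Real.sq_sqrt (by positivity)
        simp only [hsq]
        simp [sq_abs]
    _ = _ := by rw [Dg]; ring

/-! ### ENNReal Hölder-type lemmas -/

lemma hold3 {α : Type*} [MeasurableSpace α] {μ : Measure α}
    {F G H : α → ℝ≥0∞} (hF : AEMeasurable F μ) (hG : AEMeasurable G μ)
    (hH : AEMeasurable H μ) :
    ∫⁻ a, F a * G a * H a ∂μ ≤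
      (∫⁻ a, F a ^ (3:ℝ) ∂μ) ^ ((1:ℝ)/3) * (∫⁻ a, G a ^ (2:ℝ) ∂μ) ^ ((1:ℝ)/2) *
        (∫⁻ a, H a ^ (6:ℝ) ∂μ) ^ ((1:ℝ)/6) := by
  have key := ENNReal.lintegral_prod_norm_pow_le (μ := μ) (Finset.univ : Finset (Fin 3))
    (f := ![fun a => F a ^ (3:ℝ), fun a => G a ^ (2:ℝ), fun a => H a ^ (6:ℝ)])
    (p := ![(1:ℝ)/3, 1/2, 1/6]) ?_ ?_ ?_
  · calc ∫⁻ a, F a * G a * H a ∂μ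
        = ∫⁻ a, ∏ i, (![fun a => F a ^ (3:ℝ), fun a => G a ^ (2:ℝ), fun a => H a ^ (6:ℝ)]) i a
            ^ (![(1:ℝ)/3, 1/2, 1/6]) i ∂μ := by
          refine lintegral_congr fun a => ?_
          rw [Fin.prod_univ_three]
          simp only [Matrix.cons_val_zero, Matrix.cons_val_one, Matrix.head_cons,
            Matrix.cons_val_two, Matrix.tail_cons]
          rw [← ENNReal.rpow_mul, ← ENNReal.rpow_mul, ← ENNReal.rpow_mul]
          norm_num
      _ ≤ _ := key.trans_eq (by simp [Fin.prod_univ_three])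
  · intro i _
    fin_cases i
    · exact hF.pow_const _
    · exact hG.pow_const _
    · exact hH.pow_const _
  · simp [Fin.sum_univ_three]; norm_num
  · intro i _; fin_cases i <;> norm_num

lemma interp3 {α : Type*} [MeasurableSpace α] {μ : Measure α}
    {F : α → ℝ≥0∞} (hF : AEMeasurable F μ) :
    ∫⁻ a, F a ^ (3:ℝ) ∂μ ≤
      (∫⁻ a, F a ^ (2:ℝ) ∂μ) ^ ((3:ℝ)/4) * (∫⁻ a, F a ^ (6:ℝ) ∂μ) ^ ((1:ℝ)/4) := by
  have key := ENNReal.lintegral_mul_norm_pow_le (μ := μ)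
    (f := fun a => F a ^ (2:ℝ)) (g := fun a => F a ^ (6:ℝ))
    (hF.pow_const _) (hF.pow_const _) (p := (3:ℝ)/4) (q := (1:ℝ)/4)
    (by norm_num) (by norm_num) (by norm_num)
  refine le_trans (le_of_eq (lintegral_congr fun a => ?_)) key
  rw [← ENNReal.rpow_mul, ← ENNReal.rpow_mul, ← ENNReal.rpow_add_of_nonneg]
  · norm_num
  · norm_num
  · norm_num

/-! ### The Sobolev inequality `‖u‖₆ ≤ k ‖∇u‖₂` -/

lemma sobolev6 {d : ℕ} (hd : d = 2 ∨ d = 3) (Ω : Set (EuclideanSpace ℝ (Fin d)))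
    (hΩb : Bornology.IsBounded Ω) :
    ∃ k : ℝ≥0∞, k ≠ ⊤ ∧ ∀ u : EuclideanSpace ℝ (Fin d) → EuclideanSpace ℝ (Fin d),
      ContDiff ℝ 1 u → HasCompactSupport u → tsupport u ⊆ Ω →
      eLpNorm u 6 volume ≤ k * eLpNorm (fderiv ℝ u) 2 volume := by
  rcases hd with rfl | rfl
  · -- d = 2 : use p = 3/2
    refine ⟨(eLpNormLESNormFDerivOfLeConst (EuclideanSpace ℝ (Fin 2)) volume Ω (3/2) 6 : ℝ≥0)
      * (volume Ω) ^ ((2:ℝ)/3 - 1/2), ?_, ?_⟩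
    · exact ENNReal.mul_ne_top ENNReal.coe_ne_top
        (ENNReal.rpow_ne_top_of_nonneg (by norm_num) hΩb.measure_lt_top.ne)
    · intro u hu hcu hsu
      have key := eLpNorm_le_eLpNorm_fderiv_of_le (F := EuclideanSpace ℝ (Fin 2)) volume hu
        ((subset_tsupport u).trans hsu) (p := 3/2) (q := 6)
        (by rw [← NNReal.coe_le_coe]; push_cast; norm_num)
        (by rw [finrank_euclideanSpace_fin]; rw [← NNReal.coe_lt_coe]; push_cast; norm_num)
        (by rw [finrank_euclideanSpace_fin]; push_cast; norm_num) hΩb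
      have hfsupp : Function.support (fderiv ℝ u) ⊆ Ω := (support_fderiv_subset ℝ).trans hsu
      have hmeas : AEStronglyMeasurable (fderiv ℝ u) (volume.restrict Ω) :=
        (hu.continuous_fderiv one_ne_zero).aestronglyMeasurable.restrict
      have hle : ((3/2 : ℝ≥0) : ℝ≥0∞) ≤ 2 := by
        rw [show (2:ℝ≥0∞) = ((2:ℝ≥0):ℝ≥0∞) by norm_cast, ENNReal.coe_le_coe,
          ← NNReal.coe_le_coe]; push_cast; norm_num
      have step : eLpNorm (fderiv ℝ u) ((3/2 : ℝ≥0) : ℝ≥0∞) volume ≤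
          eLpNorm (fderiv ℝ u) 2 volume * (volume Ω) ^ ((2:ℝ)/3 - 1/2) := by
        calc eLpNorm (fderiv ℝ u) ((3/2 : ℝ≥0) : ℝ≥0∞) volume
            = eLpNorm (fderiv ℝ u) ((3/2 : ℝ≥0) : ℝ≥0∞) (volume.restrict Ω) :=
              (eLpNorm_restrict_eq_of_support_subset
                (ε := EuclideanSpace ℝ (Fin 2) →L[ℝ] EuclideanSpace ℝ (Fin 2)) hfsupp).symm
          _ ≤ eLpNorm (fderiv ℝ u) 2 (volume.restrict Ω) *
              (volume.restrict Ω Set.univ) ^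
                (1/(((3/2 : ℝ≥0) : ℝ≥0∞)).toReal - 1/(2:ℝ≥0∞).toReal) :=
              eLpNorm_le_eLpNorm_mul_rpow_measure_univ hle hmeas
          _ = eLpNorm (fderiv ℝ u) 2 volume * (volume Ω) ^ ((2:ℝ)/3 - 1/2) := by
              rw [eLpNorm_restrict_eq_of_support_subset
                (ε := EuclideanSpace ℝ (Fin 2) →L[ℝ] EuclideanSpace ℝ (Fin 2)) hfsupp, Measure.restrict_apply_univ]
              congr 1
              rw [ENNReal.coe_toReal]
              push_cast
              norm_num
      calc eLpNorm u 6 volume = eLpNorm u ((6:ℝ≥0):ℝ≥0∞) volume := by norm_cast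
        _ ≤ _ := key
        _ ≤ (eLpNormLESNormFDerivOfLeConst (EuclideanSpace ℝ (Fin 2)) volume Ω (3/2) 6 : ℝ≥0∞)
            * (eLpNorm (fderiv ℝ u) 2 volume * (volume Ω) ^ ((2:ℝ)/3 - 1/2)) :=
              mul_le_mul_right step _
        _ = _ := by ring
  · -- d = 3 : use p = 2
    refine ⟨(eLpNormLESNormFDerivOfLeConst (EuclideanSpace ℝ (Fin 3)) volume Ω 2 6 : ℝ≥0),
      ENNReal.coe_ne_top, ?_⟩
    intro u hu hcu hsu
    have key := eLpNorm_le_eLpNorm_fderiv_of_le (F := EuclideanSpace ℝ (Fin 3)) volume hu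
      ((subset_tsupport u).trans hsu) (p := 2) (q := 6)
      one_le_two
      (by rw [finrank_euclideanSpace_fin]; rw [← NNReal.coe_lt_coe]; push_cast; norm_num)
      (by rw [finrank_euclideanSpace_fin]; push_cast; norm_num) hΩb
    calc eLpNorm u 6 volume = eLpNorm u ((6:ℝ≥0):ℝ≥0∞) volume := by norm_cast
      _ ≤ _ := key
      _ = _ := by norm_cast

/-! ### Conversions between lintegrals and the concrete `L²` quantities -/

lemma lint_pow_eq {d : ℕ} (Ω : Set (EuclideanSpace ℝ (Fin d)))
    (f : EuclideanSpace ℝ (Fin d) → ℝ) (hf0 : ∀ x, 0 ≤ f x) (hfc : Continuous f)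
    (hcs : HasCompactSupport f) (hsupp : ∀ x, x ∉ Ω → f x = 0) (n : ℕ) (hn : n ≠ 0) :
    ∫⁻ x, (ENNReal.ofReal (f x)) ^ (n:ℝ) ∂volume = ENNReal.ofReal (∫ x in Ω, f x ^ n) := by
  have h1 : ∀ x, (ENNReal.ofReal (f x)) ^ (n:ℝ) = ENNReal.ofReal (f x ^ n) := by
    intro x
    rw [ENNReal.ofReal_rpow_of_nonneg (hf0 x) (by positivity), Real.rpow_natCast]
  have hfn_cont : Continuous fun x => f x ^ n := hfc.pow n
  have hfn_cs : HasCompactSupport fun x => f x ^ n :=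
    hcs.comp_left (g := fun t : ℝ => t ^ n) (by simp [hn])
  have hint : Integrable (fun x => f x ^ n) volume :=
    hfn_cont.integrable_of_hasCompactSupport hfn_cs
  calc ∫⁻ x, (ENNReal.ofReal (f x)) ^ (n:ℝ) ∂volume
      = ∫⁻ x, ENNReal.ofReal (f x ^ n) ∂volume := lintegral_congr h1
    _ = ENNReal.ofReal (∫ x, f x ^ n) :=
        (ofReal_integral_eq_lintegral_ofReal hint
          (Filter.Eventually.of_forall fun x => pow_nonneg (hf0 x) n)).symm
    _ = ENNReal.ofReal (∫ x in Ω, f x ^ n) := by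
        rw [setIntegral_eq_integral_of_forall_compl_eq_zero
          (fun x hx => by rw [hsupp x hx]; exact zero_pow hn)]

section PerFunction

variable {d : ℕ} {Ω : Set (EuclideanSpace ℝ (Fin d))}
  {u : EuclideanSpace ℝ (Fin d) → EuclideanSpace ℝ (Fin d)}

lemma cont_pd (hu : ContDiff ℝ (⊤ : ℕ∞) u) (i j : Fin d) :
    Continuous fun x => partialDeriv' u x i j :=
  (EuclideanSpace.proj i).continuous.comp
    ((hu.continuous_fderiv (by simp)).clm_apply continuous_const)

lemma pd_zero (hsu : tsupport u ⊆ Ω) {x : EuclideanSpace ℝ (Fin d)} (hx : x ∉ Ω) (i j : Fin d) :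
    partialDeriv' u x i j = 0 := by
  have h0 : fderiv ℝ u x = 0 := by
    by_contra h
    exact hx (hsu (support_fderiv_subset ℝ (Function.mem_support.mpr h)))
  rw [partialDeriv', h0]
  rfl

lemma cont_Dg (hu : ContDiff ℝ (⊤ : ℕ∞) u) : Continuous (Dg u) := by
  refine Continuous.sqrt ?_
  exact continuous_finset_sum _ fun i _ => continuous_finset_sum _ fun j _ => (cont_pd hu i j).pow 2

lemma Dg_nonneg (x : EuclideanSpace ℝ (Fin d)) : 0 ≤ Dg u x := Real.sqrt_nonneg _

lemma Dg_zero (hsu : tsupport u ⊆ Ω) {x : EuclideanSpace ℝ (Fin d)} (hx : x ∉ Ω) :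
    Dg u x = 0 := by
  rw [Dg]
  have : ∀ i : Fin d, ∑ j, partialDeriv' u x i j ^ 2 = 0 := by
    intro i
    refine Finset.sum_eq_zero fun j _ => ?_
    rw [pd_zero hsu hx]; ring
  simp [this]

lemma Dg_cs (hcu : HasCompactSupport u) (hsu : tsupport u ⊆ Ω)
    (hΩc : IsCompact (closure Ω)) : HasCompactSupport (Dg u) := by
  refine HasCompactSupport.intro hcu (fun x hx => ?_)
  rw [Dg]
  have : ∀ i : Fin d, ∑ j, partialDeriv' u x i j ^ 2 = 0 := by
    intro i
    refine Finset.sum_eq_zero fun j _ => ?_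
    have h0 : fderiv ℝ u x = 0 := by
      by_contra h
      exact hx (support_fderiv_subset ℝ (Function.mem_support.mpr h))
    rw [partialDeriv', h0]
    norm_num
  simp [this]

/-- `∫⁻ (ofReal ‖u‖)² = ofReal (normL2 Ω u)²`. -/
lemma lint_norm_sq (hu : ContDiff ℝ (⊤ : ℕ∞) u) (hcu : HasCompactSupport u) (hsu : tsupport u ⊆ Ω) :
    ∫⁻ x, (ENNReal.ofReal ‖u x‖) ^ (2:ℝ) ∂volume = ENNReal.ofReal (normL2 Ω u ^ 2) := by
  have h := lint_pow_eq Ω (fun x => ‖u x‖) (fun x => norm_nonneg _) hu.continuous.norm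
    hcu.norm (fun x hx => by simp [image_eq_zero_of_notMem_tsupport (fun h => hx (hsu h))])
    2 (by norm_num)
  rw [show ((2:ℕ):ℝ) = (2:ℝ) by norm_num] at h
  rw [h]
  congr 1
  have hexp : ∀ x : EuclideanSpace ℝ (Fin d), ‖u x‖ ^ 2 = ∑ i, (u x i) ^ 2 := by
    intro x
    rw [EuclideanSpace.norm_eq, Real.sq_sqrt (by positivity)]
    simp [sq_abs]
  rw [integral_congr_ae (Filter.Eventually.of_forall fun x => hexp x)]
  have hint : ∀ i : Fin d, Integrable (fun x => (u x i) ^ 2) (volume.restrict Ω) := by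
    intro i
    refine (Continuous.integrable_of_hasCompactSupport ?_ ?_).restrict
    · exact ((EuclideanSpace.proj i).continuous.comp hu.continuous).pow 2
    · refine HasCompactSupport.intro hcu (fun x hx => ?_)
      rw [image_eq_zero_of_notMem_tsupport hx]
      norm_num
  rw [integral_finset_sum _ fun i _ => hint i]
  rw [normL2, Real.sq_sqrt]
  exact Finset.sum_nonneg fun i _ => integral_nonneg fun x => sq_nonneg _

/-- `∫⁻ (ofReal (Dg u))² = ofReal (gradNormL2 Ω u)²`. -/
lemma lint_Dg_sq (hu : ContDiff ℝ (⊤ : ℕ∞) u) (hcu : HasCompactSupport u) (hsu : tsupport u ⊆ Ω) :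
    ∫⁻ x, (ENNReal.ofReal (Dg u x)) ^ (2:ℝ) ∂volume
      = ENNReal.ofReal (gradNormL2 Ω u ^ 2) := by
  have h := lint_pow_eq Ω (Dg u) Dg_nonneg (cont_Dg hu)
    (by
      refine HasCompactSupport.intro hcu (fun x hx => ?_)
      rw [Dg]
      have : ∀ i : Fin d, ∑ j, partialDeriv' u x i j ^ 2 = 0 := by
        intro i
        refine Finset.sum_eq_zero fun j _ => ?_
        have h0 : fderiv ℝ u x = 0 := by
          by_contra h
          exact hx (support_fderiv_subset ℝ (Function.mem_support.mpr h))
        rw [partialDeriv', h0]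
        norm_num
      simp [this])
    (fun x hx => Dg_zero hsu hx) 2 (by norm_num)
  rw [show ((2:ℕ):ℝ) = (2:ℝ) by norm_num] at h
  rw [h]
  congr 1
  have hexp : ∀ x : EuclideanSpace ℝ (Fin d),
      Dg u x ^ 2 = ∑ i, ∑ j, partialDeriv' u x i j ^ 2 := by
    intro x
    rw [Dg, Real.sq_sqrt (by positivity)]
  rw [integral_congr_ae (Filter.Eventually.of_forall fun x => hexp x)]
  have hint : ∀ (i j : Fin d),
      Integrable (fun x => partialDeriv' u x i j ^ 2) (volume.restrict Ω) := by
    intro i j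
    refine (Continuous.integrable_of_hasCompactSupport ((cont_pd hu i j).pow 2) ?_).restrict
    refine HasCompactSupport.intro hcu (fun x hx => ?_)
    have h0 : fderiv ℝ u x = 0 := by
      by_contra h
      exact hx (support_fderiv_subset ℝ (Function.mem_support.mpr h))
    show partialDeriv' u x i j ^ 2 = 0
    rw [partialDeriv', h0]
    norm_num
  rw [integral_finset_sum _ fun i _ => (integrable_finset_sum _ fun j _ => hint i j)]
  rw [gradNormL2, Real.sq_sqrt]
  · refine Finset.sum_congr rfl fun i _ => ?_
    rw [integral_finset_sum _ fun j _ => hint i j]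
  · exact Finset.sum_nonneg fun i _ => Finset.sum_nonneg fun j _ =>
      integral_nonneg fun x => sq_nonneg _

/-- the `L⁶` norm as a lintegral. -/
lemma elp6_eq (u : EuclideanSpace ℝ (Fin d) → EuclideanSpace ℝ (Fin d)) :
    eLpNorm u 6 volume = (∫⁻ x, (ENNReal.ofReal ‖u x‖) ^ (6:ℝ) ∂volume) ^ ((1:ℝ)/6) := by
  rw [eLpNorm_eq_lintegral_rpow_enorm_toReal (by norm_num) (by norm_num)]
  have h6 : (6:ℝ≥0∞).toReal = 6 := by norm_num
  rw [h6]
  congr 1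
  refine lintegral_congr fun x => ?_
  rw [← ofReal_norm]

/-- the gradient `L²` bound: `‖∇u‖_{L²,op} ≤ gradNormL2`. -/
lemma elp_fderiv_le (hu : ContDiff ℝ (⊤ : ℕ∞) u) (hcu : HasCompactSupport u)
    (hsu : tsupport u ⊆ Ω) :
    eLpNorm (fderiv ℝ u) 2 volume ≤ ENNReal.ofReal (gradNormL2 Ω u) := by
  rw [eLpNorm_eq_lintegral_rpow_enorm_toReal (by norm_num) (by norm_num)]
  have hpt : ∀ x, (‖fderiv ℝ u x‖₊ : ℝ≥0∞) ^ ((2:ℝ≥0∞).toReal)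
      ≤ (ENNReal.ofReal (Dg u x)) ^ (2:ℝ) := by
    intro x
    rw [show (‖fderiv ℝ u x‖₊ : ℝ≥0∞) = ENNReal.ofReal ‖fderiv ℝ u x‖ from (ofReal_norm _).symm]
    have h2 : (2:ℝ≥0∞).toReal = (2:ℝ) := by norm_num
    rw [h2]
    refine ENNReal.rpow_le_rpow ?_ (by norm_num)
    exact ENNReal.ofReal_le_ofReal ((opnorm_le (fderiv ℝ u x)).trans_eq rfl)
  calc (∫⁻ x, (‖fderiv ℝ u x‖₊ : ℝ≥0∞) ^ ((2:ℝ≥0∞).toReal) ∂volume) ^ (1/(2:ℝ≥0∞).toReal)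
      ≤ (∫⁻ x, (ENNReal.ofReal (Dg u x)) ^ (2:ℝ) ∂volume) ^ (1/(2:ℝ≥0∞).toReal) := by
        refine ENNReal.rpow_le_rpow (lintegral_mono hpt) (by norm_num)
    _ = (ENNReal.ofReal (gradNormL2 Ω u ^ 2)) ^ ((1:ℝ)/2) := by
        rw [lint_Dg_sq hu hcu hsu]
        norm_num
    _ = ENNReal.ofReal (gradNormL2 Ω u) := by
        rw [ENNReal.ofReal_rpow_of_nonneg (by positivity) (by norm_num)]
        congr 1
        have hg : (0:ℝ) ≤ gradNormL2 Ω u := Real.sqrt_nonneg _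
        rw [← Real.rpow_natCast (gradNormL2 Ω u) 2, ← Real.rpow_mul hg]
        norm_num

end PerFunction


lemma half_sq {a : ℝ} (ha : 0 ≤ a) :
    (ENNReal.ofReal (a ^ 2)) ^ ((1:ℝ)/2) = ENNReal.ofReal a := by
  rw [ENNReal.ofReal_rpow_of_nonneg (by positivity) (by norm_num)]
  congr 1
  rw [← Real.rpow_natCast a 2, ← Real.rpow_mul ha]
  norm_num

lemma quarter_sq {a : ℝ} (ha : 0 ≤ a) :
    (ENNReal.ofReal (a ^ 2)) ^ ((1:ℝ)/4) = ENNReal.ofReal (a ^ ((1:ℝ)/2)) := by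
  rw [ENNReal.ofReal_rpow_of_nonneg (by positivity) (by norm_num)]
  congr 1
  rw [← Real.rpow_natCast a 2, ← Real.rpow_mul ha]
  norm_num

/-- The main estimate for a single pairing term. -/
lemma pair_bound {d : ℕ} {Ω : Set (EuclideanSpace ℝ (Fin d))} {k : ℝ≥0∞} (hk : k ≠ ⊤)
    (hsob : ∀ f : EuclideanSpace ℝ (Fin d) → EuclideanSpace ℝ (Fin d),
      ContDiff ℝ 1 f → HasCompactSupport f → tsupport f ⊆ Ω →
      eLpNorm f 6 volume ≤ k * eLpNorm (fderiv ℝ f) 2 volume)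
    {u v w : EuclideanSpace ℝ (Fin d) → EuclideanSpace ℝ (Fin d)}
    (hu : ContDiff ℝ (⊤ : ℕ∞) u) (hcu : HasCompactSupport u) (hsu : tsupport u ⊆ Ω)
    (hv : ContDiff ℝ (⊤ : ℕ∞) v) (hcv : HasCompactSupport v) (hsv : tsupport v ⊆ Ω)
    (hw : ContDiff ℝ (⊤ : ℕ∞) w) (hcw : HasCompactSupport w) (hsw : tsupport w ⊆ Ω) :
    |pairL2 Ω (convTerm u v) (fun x i => w x i)| ≤
      ((k ^ ((1:ℝ)/2)).toReal * k.toReal) * (normL2 Ω u) ^ ((1:ℝ)/2) *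
        (gradNormL2 Ω u) ^ ((1:ℝ)/2) * gradNormL2 Ω v * gradNormL2 Ω w := by
  set nu := normL2 Ω u with hnu
  set gu := gradNormL2 Ω u with hgu
  set gv := gradNormL2 Ω v with hgv
  set gw := gradNormL2 Ω w with hgw
  have hnu0 : 0 ≤ nu := Real.sqrt_nonneg _
  have hgu0 : 0 ≤ gu := Real.sqrt_nonneg _
  have hgv0 : 0 ≤ gv := Real.sqrt_nonneg _
  have hgw0 : 0 ≤ gw := Real.sqrt_nonneg _
  set Fe := fun x => ENNReal.ofReal ‖u x‖ with hFe
  set Ge := fun x => ENNReal.ofReal (Dg v x) with hGe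
  set He := fun x => ENNReal.ofReal ‖w x‖ with hHe
  -- continuity and integrability facts
  have hcont1 : Continuous fun x => ∑ i, convTerm u v x i * w x i := by
    refine continuous_finset_sum _ fun i _ => Continuous.mul ?_ ?_
    · simp only [convTerm]
      exact continuous_finset_sum _ fun j _ =>
        ((EuclideanSpace.proj j).continuous.comp hu.continuous).mul (cont_pd hv i j)
    · exact (EuclideanSpace.proj i).continuous.comp hw.continuous
  have hcs1 : HasCompactSupport fun x => ∑ i, convTerm u v x i * w x i := by
    refine HasCompactSupport.intro hcw fun x hx => ?_
    have h0 : w x = 0 := image_eq_zero_of_notMem_tsupport hx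
    refine Finset.sum_eq_zero fun i _ => ?_
    rw [h0]
    simp
  have hint1 : Integrable (fun x => ∑ i, convTerm u v x i * w x i) (volume.restrict Ω) :=
    (hcont1.integrable_of_hasCompactSupport hcs1).restrict
  have hcontP : Continuous fun x => ‖u x‖ * Dg v x * ‖w x‖ :=
    (hu.continuous.norm.mul (cont_Dg hv)).mul hw.continuous.norm
  have hcsP : HasCompactSupport fun x => ‖u x‖ * Dg v x * ‖w x‖ := by
    refine HasCompactSupport.intro hcu fun x hx => ?_
    rw [image_eq_zero_of_notMem_tsupport hx]
    simp
  have hintP : Integrable (fun x => ‖u x‖ * Dg v x * ‖w x‖) volume :=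
    hcontP.integrable_of_hasCompactSupport hcsP
  have hP0 : ∀ x, 0 ≤ ‖u x‖ * Dg v x * ‖w x‖ := fun x =>
    mul_nonneg (mul_nonneg (norm_nonneg _) (Dg_nonneg _)) (norm_nonneg _)
  -- the real estimate
  have step_real : |pairL2 Ω (convTerm u v) (fun x i => w x i)| ≤
      (∫⁻ x, Fe x * Ge x * He x ∂volume).toReal := by
    calc |pairL2 Ω (convTerm u v) (fun x i => w x i)|
        = ‖∫ x in Ω, ∑ i, convTerm u v x i * w x i‖ := by rw [pairL2, Real.norm_eq_abs]
      _ ≤ ∫ x in Ω, ‖∑ i, convTerm u v x i * w x i‖ := norm_integral_le_integral_norm _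
      _ = ∫ x in Ω, |∑ i, convTerm u v x i * w x i| := by simp [Real.norm_eq_abs]
      _ ≤ ∫ x in Ω, ‖u x‖ * Dg v x * ‖w x‖ :=
          integral_mono hint1.abs hintP.restrict (fun x => conv_pointwise u v w x)
      _ ≤ ∫ x, ‖u x‖ * Dg v x * ‖w x‖ :=
          setIntegral_le_integral hintP (Filter.Eventually.of_forall hP0)
      _ = (∫⁻ x, Fe x * Ge x * He x ∂volume).toReal := by
          rw [integral_eq_lintegral_of_nonneg_ae (Filter.Eventually.of_forall hP0)
            hcontP.aestronglyMeasurable]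
          congr 1
          refine lintegral_congr fun x => ?_
          rw [ENNReal.ofReal_mul (mul_nonneg (norm_nonneg _) (Dg_nonneg _)),
            ENNReal.ofReal_mul (norm_nonneg _)]
  -- measurability
  have hFm : AEMeasurable Fe volume :=
    (ENNReal.measurable_ofReal.comp hu.continuous.norm.measurable).aemeasurable
  have hGm : AEMeasurable Ge volume :=
    (ENNReal.measurable_ofReal.comp (cont_Dg hv).measurable).aemeasurable
  have hHm : AEMeasurable He volume :=
    (ENNReal.measurable_ofReal.comp hw.continuous.norm.measurable).aemeasurable
  -- Sobolev bounds
  have hsobu : (∫⁻ x, Fe x ^ (6:ℝ) ∂volume) ^ ((1:ℝ)/6) ≤ k * ENNReal.ofReal gu := by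
    rw [← elp6_eq u]
    exact (hsob u (hu.of_le (by simp)) hcu hsu).trans
      (mul_le_mul_right (elp_fderiv_le hu hcu hsu) k)
  have hsobw : (∫⁻ x, He x ^ (6:ℝ) ∂volume) ^ ((1:ℝ)/6) ≤ k * ENNReal.ofReal gw := by
    rw [← elp6_eq w]
    exact (hsob w (hw.of_le (by simp)) hcw hsw).trans
      (mul_le_mul_right (elp_fderiv_le hw hcw hsw) k)
  -- interpolation for the L³ factor
  have hA : ∫⁻ x, Fe x ^ (2:ℝ) ∂volume = ENNReal.ofReal (nu ^ 2) := lint_norm_sq hu hcu hsu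
  have hC : ∫⁻ x, Ge x ^ (2:ℝ) ∂volume = ENNReal.ofReal (gv ^ 2) := lint_Dg_sq hv hcv hsv
  have h3 : (∫⁻ x, Fe x ^ (3:ℝ) ∂volume) ^ ((1:ℝ)/3) ≤
      (∫⁻ x, Fe x ^ (2:ℝ) ∂volume) ^ ((1:ℝ)/4) *
        ((∫⁻ x, Fe x ^ (6:ℝ) ∂volume) ^ ((1:ℝ)/6)) ^ ((1:ℝ)/2) := by
    have h := ENNReal.rpow_le_rpow (interp3 hFm) (by norm_num : (0:ℝ) ≤ 1/3)
    rw [ENNReal.mul_rpow_of_nonneg _ _ (by norm_num), ← ENNReal.rpow_mul,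
      ← ENNReal.rpow_mul] at h
    rw [← ENNReal.rpow_mul]
    convert h using 3 <;> norm_num
  -- assemble the ENNReal chain
  have chain : (∫⁻ x, Fe x * Ge x * He x ∂volume) ≤
      (ENNReal.ofReal (nu ^ ((1:ℝ)/2)) * ((k ^ ((1:ℝ)/2)) * ENNReal.ofReal (gu ^ ((1:ℝ)/2))))
        * ENNReal.ofReal gv * (k * ENNReal.ofReal gw) := by
    calc (∫⁻ x, Fe x * Ge x * He x ∂volume)
        ≤ (∫⁻ x, Fe x ^ (3:ℝ) ∂volume) ^ ((1:ℝ)/3) *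
            (∫⁻ x, Ge x ^ (2:ℝ) ∂volume) ^ ((1:ℝ)/2) *
              (∫⁻ x, He x ^ (6:ℝ) ∂volume) ^ ((1:ℝ)/6) := hold3 hFm hGm hHm
      _ ≤ ((∫⁻ x, Fe x ^ (2:ℝ) ∂volume) ^ ((1:ℝ)/4) *
            ((∫⁻ x, Fe x ^ (6:ℝ) ∂volume) ^ ((1:ℝ)/6)) ^ ((1:ℝ)/2)) *
            (∫⁻ x, Ge x ^ (2:ℝ) ∂volume) ^ ((1:ℝ)/2) *
              (∫⁻ x, He x ^ (6:ℝ) ∂volume) ^ ((1:ℝ)/6) := by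
          gcongr
      _ ≤ ((ENNReal.ofReal (nu ^ 2)) ^ ((1:ℝ)/4) *
            ((k * ENNReal.ofReal gu)) ^ ((1:ℝ)/2)) *
            (ENNReal.ofReal (gv ^ 2)) ^ ((1:ℝ)/2) * (k * ENNReal.ofReal gw) := by
          rw [hA, hC]
          gcongr
      _ = (ENNReal.ofReal (nu ^ ((1:ℝ)/2)) *
            ((k ^ ((1:ℝ)/2)) * ENNReal.ofReal (gu ^ ((1:ℝ)/2))))
            * ENNReal.ofReal gv * (k * ENNReal.ofReal gw) := by
          rw [quarter_sq hnu0, half_sq hgv0,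
            ENNReal.mul_rpow_of_nonneg _ _ (by norm_num : (0:ℝ) ≤ 1/2),
            ENNReal.ofReal_rpow_of_nonneg hgu0 (by norm_num : (0:ℝ) ≤ 1/2)]
  -- pass to real numbers
  have hfin : (ENNReal.ofReal (nu ^ ((1:ℝ)/2)) *
      ((k ^ ((1:ℝ)/2)) * ENNReal.ofReal (gu ^ ((1:ℝ)/2))))
      * ENNReal.ofReal gv * (k * ENNReal.ofReal gw) ≠ ⊤ := by
    refine ENNReal.mul_ne_top (ENNReal.mul_ne_top (ENNReal.mul_ne_top ENNReal.ofReal_ne_top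
      (ENNReal.mul_ne_top ?_ ENNReal.ofReal_ne_top)) ENNReal.ofReal_ne_top)
      (ENNReal.mul_ne_top hk ENNReal.ofReal_ne_top)
    exact ENNReal.rpow_ne_top_of_nonneg (by norm_num) hk
  refine step_real.trans ?_
  have := ENNReal.toReal_mono hfin chain
  refine this.trans ?_
  simp only [ENNReal.toReal_mul]
  rw [ENNReal.toReal_ofReal (Real.rpow_nonneg hnu0 _),
    ENNReal.toReal_ofReal (Real.rpow_nonneg hgu0 _),
    ENNReal.toReal_ofReal hgv0, ENNReal.toReal_ofReal hgw0]
  exact le_of_eq (by ring)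

end BStarAux


/-- Lemma 2.1, second bound:
`|b*(u,v,w)| ≤ M ‖u‖^{1/2} ‖∇u‖^{1/2} ‖∇v‖ ‖∇w‖` for smooth compactly
supported vector fields on a bounded open set `Ω ⊆ ℝ^d`, `d = 2` or `3`. -/
theorem bStar_bound_interpolated (d : ℕ) (hd : d = 2 ∨ d = 3)
    (Ω : Set (EuclideanSpace ℝ (Fin d))) (hΩo : IsOpen Ω)
    (hΩb : Bornology.IsBounded Ω) :
    ∃ M : ℝ, 0 < M ∧
      ∀ u v w : EuclideanSpace ℝ (Fin d) → EuclideanSpace ℝ (Fin d),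
        ContDiff ℝ (⊤ : ℕ∞) u → HasCompactSupport u → tsupport u ⊆ Ω →
        ContDiff ℝ (⊤ : ℕ∞) v → HasCompactSupport v → tsupport v ⊆ Ω →
        ContDiff ℝ (⊤ : ℕ∞) w → HasCompactSupport w → tsupport w ⊆ Ω →
        |bStar Ω u v w| ≤ M * (normL2 Ω u) ^ ((1 : ℝ) / 2) *
          (gradNormL2 Ω u) ^ ((1 : ℝ) / 2) * gradNormL2 Ω v * gradNormL2 Ω w := by
  obtain ⟨k, hk, hsob⟩ := BStarAux.sobolev6 hd Ω hΩb
  refine ⟨(k ^ ((1:ℝ)/2)).toReal * k.toReal + 1, by positivity, ?_⟩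
  intro u v w hu hcu hsu hv hcv hsv hw hcw hsw
  set K := (k ^ ((1:ℝ)/2)).toReal * k.toReal with hK
  have hK0 : 0 ≤ K := mul_nonneg ENNReal.toReal_nonneg ENNReal.toReal_nonneg
  have h1 := BStarAux.pair_bound hk hsob hu hcu hsu hv hcv hsv hw hcw hsw
  have h2 := BStarAux.pair_bound hk hsob hu hcu hsu hw hcw hsw hv hcv hsv
  have hnu0 : (0:ℝ) ≤ (normL2 Ω u) ^ ((1:ℝ)/2) :=
    Real.rpow_nonneg (Real.sqrt_nonneg _) _
  have hgu0 : (0:ℝ) ≤ (gradNormL2 Ω u) ^ ((1:ℝ)/2) :=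
    Real.rpow_nonneg (Real.sqrt_nonneg _) _
  have hgv0 : (0:ℝ) ≤ gradNormL2 Ω v := Real.sqrt_nonneg _
  have hgw0 : (0:ℝ) ≤ gradNormL2 Ω w := Real.sqrt_nonneg _
  have hX0 : (0:ℝ) ≤ (normL2 Ω u) ^ ((1:ℝ)/2) * (gradNormL2 Ω u) ^ ((1:ℝ)/2)
      * gradNormL2 Ω v * gradNormL2 Ω w :=
    mul_nonneg (mul_nonneg (mul_nonneg hnu0 hgu0) hgv0) hgw0
  rw [bStar]
  calc |1/2 * pairL2 Ω (convTerm u v) (fun x i => w x i)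
        - 1/2 * pairL2 Ω (convTerm u w) (fun x i => v x i)|
      ≤ |1/2 * pairL2 Ω (convTerm u v) (fun x i => w x i)|
        + |1/2 * pairL2 Ω (convTerm u w) (fun x i => v x i)| := abs_sub _ _
    _ = 1/2 * |pairL2 Ω (convTerm u v) (fun x i => w x i)|
        + 1/2 * |pairL2 Ω (convTerm u w) (fun x i => v x i)| := by
          rw [abs_mul, abs_mul, abs_of_pos (by norm_num : (0:ℝ) < 1/2)]
    _ ≤ 1/2 * (K * (normL2 Ω u) ^ ((1:ℝ)/2) * (gradNormL2 Ω u) ^ ((1:ℝ)/2)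
          * gradNormL2 Ω v * gradNormL2 Ω w)
        + 1/2 * (K * (normL2 Ω u) ^ ((1:ℝ)/2) * (gradNormL2 Ω u) ^ ((1:ℝ)/2)
          * gradNormL2 Ω w * gradNormL2 Ω v) := by
          refine add_le_add ?_ ?_
          · exact mul_le_mul_of_nonneg_left h1 (by norm_num)
          · exact mul_le_mul_of_nonneg_left h2 (by norm_num)
    _ = K * ((normL2 Ω u) ^ ((1:ℝ)/2) * (gradNormL2 Ω u) ^ ((1:ℝ)/2)
          * gradNormL2 Ω v * gradNormL2 Ω w) := by ring
    _ ≤ (K + 1) * ((normL2 Ω u) ^ ((1:ℝ)/2) * (gradNormL2 Ω u) ^ ((1:ℝ)/2)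
          * gradNormL2 Ω v * gradNormL2 Ω w) :=
        mul_le_mul_of_nonneg_right (by linarith) hX0
    _ = (K + 1) * (normL2 Ω u) ^ ((1:ℝ)/2) * (gradNormL2 Ω u) ^ ((1:ℝ)/2)
          * gradNormL2 Ω v * gradNormL2 Ω w := by ring
end

section
/- Let Ω ⊂ ℝ^d (d = 2 or d = 3) be a bounded open set. There exists a constant M > 0, depending only on Ω, such that for all smooth vector fields u, v, w : ℝ^d → ℝ^d with compact support contained in Ω, the explicitly skew-symmetric trilinear form satisfies |b*(u, v, w)| ≤ M · ‖u‖_{L²(Ω)} · ( ‖∇v‖_{L³(Ω)} + ‖v‖_{L^∞(Ω)} ) · ‖∇w‖_{L²(Ω)}. -/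
open MeasureTheory
open scoped ENNReal NNReal

/-- `‖∇v‖_{L³(Ω)}`: the `L³` norm over `Ω` of the pointwise Euclidean (Frobenius)
norm of the Jacobian matrix of `v`. -/
noncomputable def gradNormL3 {d : ℕ} (Ω : Set (EuclideanSpace ℝ (Fin d)))
    (v : EuclideanSpace ℝ (Fin d) → EuclideanSpace ℝ (Fin d)) : ℝ :=
  (∫ x in Ω, (Real.sqrt (∑ i, ∑ j, (partialDeriv' v x i j) ^ 2)) ^ 3) ^ ((1 : ℝ) / 3)

/-- `‖v‖_{L^∞(Ω)}`: the essential supremum over `Ω` of the pointwise Euclidean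
norm of `v`. -/
noncomputable def normLinf {d : ℕ} (Ω : Set (EuclideanSpace ℝ (Fin d)))
    (v : EuclideanSpace ℝ (Fin d) → EuclideanSpace ℝ (Fin d)) : ℝ :=
  essSup (fun x => Real.sqrt (∑ i, (v x i) ^ 2)) (volume.restrict Ω)

/-! ### Auxiliary material -/

/-- The (pointwise) Frobenius norm of the Jacobian. -/
noncomputable def frob {d : ℕ}
    (v : EuclideanSpace ℝ (Fin d) → EuclideanSpace ℝ (Fin d))
    (x : EuclideanSpace ℝ (Fin d)) : ℝ :=
  Real.sqrt (∑ i, ∑ j, (partialDeriv' v x i j)^2)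

lemma abs_sum_mul_le' {n : ℕ} (a b : Fin n → ℝ) :
    |∑ i, a i * b i| ≤ Real.sqrt (∑ i, (a i)^2) * Real.sqrt (∑ i, (b i)^2) := by
  rw [abs_le]
  constructor
  · have h := Real.sum_mul_le_sqrt_mul_sqrt Finset.univ a (fun i => -b i)
    simp only [mul_neg, Finset.sum_neg_distrib, neg_sq] at h
    linarith
  · exact Real.sum_mul_le_sqrt_mul_sqrt _ a b

lemma opNorm_le_frobenius {d : ℕ} (T : EuclideanSpace ℝ (Fin d) →L[ℝ] EuclideanSpace ℝ (Fin d)) :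
    ‖T‖ ≤ Real.sqrt (∑ i, ∑ j, (T (EuclideanSpace.single j 1) i)^2) := by
  apply ContinuousLinearMap.opNorm_le_bound _ (Real.sqrt_nonneg _)
  intro y
  have hy : y = ∑ j, y j • EuclideanSpace.single j 1 := by
    ext k
    rw [WithLp.ofLp_sum, Finset.sum_apply]
    simp [EuclideanSpace.single_apply]
  have hTy : ∀ i, T y i = ∑ j, y j * T (EuclideanSpace.single j 1) i := by
    intro i
    conv_lhs => rw [hy]
    rw [map_sum, WithLp.ofLp_sum, Finset.sum_apply]
    simp
  have h1 : ‖T y‖ ≤ Real.sqrt (∑ i, (∑ j, y j * T (EuclideanSpace.single j 1) i)^2) := by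
    rw [EuclideanSpace.norm_eq]
    apply Real.sqrt_le_sqrt
    apply Finset.sum_le_sum
    intro i _
    rw [hTy i]
    simp [sq_abs]
  refine h1.trans ?_
  have h2 : ∑ i, (∑ j, y j * T (EuclideanSpace.single j 1) i)^2 ≤
      (∑ i, ∑ j, (T (EuclideanSpace.single j 1) i)^2) * ‖y‖^2 := by
    rw [Finset.sum_mul]
    apply Finset.sum_le_sum
    intro i _
    calc (∑ j, y j * T (EuclideanSpace.single j 1) i)^2
        ≤ (∑ j, (y j)^2) * (∑ j, (T (EuclideanSpace.single j 1) i)^2) :=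
          Finset.sum_mul_sq_le_sq_mul_sq _ _ _
      _ = (∑ j, (T (EuclideanSpace.single j 1) i)^2) * ‖y‖^2 := by
          rw [mul_comm]
          congr 1
          rw [EuclideanSpace.norm_eq, Real.sq_sqrt (by positivity)]
          simp [sq_abs]
  calc Real.sqrt (∑ i, (∑ j, y j * T (EuclideanSpace.single j 1) i)^2)
      ≤ Real.sqrt ((∑ i, ∑ j, (T (EuclideanSpace.single j 1) i)^2) * ‖y‖^2) :=
        Real.sqrt_le_sqrt h2
    _ = _ := by
        rw [Real.sqrt_mul (by positivity), Real.sqrt_sq (norm_nonneg _)]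

section dsec
variable {d : ℕ} {u v w : EuclideanSpace ℝ (Fin d) → EuclideanSpace ℝ (Fin d)}
  {Ω : Set (EuclideanSpace ℝ (Fin d))}

lemma norm_sq_eq_sum (y : EuclideanSpace ℝ (Fin d)) : ‖y‖^2 = ∑ i, (y i)^2 := by
  rw [EuclideanSpace.norm_eq, Real.sq_sqrt (by positivity)]
  simp [sq_abs]

lemma continuous_partialDeriv (hv : ContDiff ℝ (⊤ : ℕ∞) v) (i j : Fin d) :
    Continuous (fun x => partialDeriv' v x i j) := by
  have hDv : Continuous (fderiv ℝ v) := (hv.fderiv_right (m := (⊤ : ℕ∞)) (by simp)).continuous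
  exact (EuclideanSpace.proj i).continuous.comp (hDv.clm_apply continuous_const)

lemma pd_cs (h2v : HasCompactSupport v) (i j : Fin d) :
    HasCompactSupport (fun x => partialDeriv' v x i j) := by
  apply HasCompactSupport.intro h2v
  intro x hx
  have h0 : fderiv ℝ v x = 0 := by
    by_contra h
    exact hx (support_fderiv_subset ℝ (Function.mem_support.mpr h))
  simp [partialDeriv', h0]

lemma continuous_frob (hv : ContDiff ℝ (⊤ : ℕ∞) v) : Continuous (frob v) := by
  apply Continuous.sqrt
  apply continuous_finset_sum
  intro i _
  apply continuous_finset_sum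
  intro j _
  exact (continuous_partialDeriv hv i j).pow 2

lemma frob_support (h2v : HasCompactSupport v) : HasCompactSupport (frob v) := by
  apply HasCompactSupport.intro h2v
  intro x hx
  have h0 : fderiv ℝ v x = 0 := by
    by_contra h
    exact hx (support_fderiv_subset ℝ (Function.mem_support.mpr h))
  simp [frob, partialDeriv', h0]

lemma frob_nonneg (x : EuclideanSpace ℝ (Fin d)) : 0 ≤ frob v x := Real.sqrt_nonneg _

lemma opNorm_le_frob (x : EuclideanSpace ℝ (Fin d)) : ‖fderiv ℝ v x‖ ≤ frob v x :=
  opNorm_le_frobenius (fderiv ℝ v x)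

lemma conv_pointwise (u w : EuclideanSpace ℝ (Fin d) → EuclideanSpace ℝ (Fin d))
    (x : EuclideanSpace ℝ (Fin d)) :
    |∑ i, convTerm u v x i * w x i| ≤ ‖u x‖ * frob v x * ‖w x‖ := by
  have h1 := abs_sum_mul_le' (n := d) (fun i => convTerm u v x i) (fun i => w x i)
  refine h1.trans ?_
  have hw : Real.sqrt (∑ i, (w x i)^2) = ‖w x‖ := by
    rw [← norm_sq_eq_sum, Real.sqrt_sq (norm_nonneg _)]
  have hu : Real.sqrt (∑ i, (convTerm u v x i)^2) ≤ ‖u x‖ * frob v x := by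
    have h2 : ∑ i, (convTerm u v x i)^2 ≤ (‖u x‖ * frob v x)^2 := by
      have hnx : (‖u x‖ * frob v x)^2
          = (∑ j, (u x j)^2) * (∑ i, ∑ j, (partialDeriv' v x i j)^2) := by
        rw [mul_pow, norm_sq_eq_sum, frob, Real.sq_sqrt (by positivity)]
      rw [hnx, Finset.mul_sum]
      apply Finset.sum_le_sum
      intro i _
      exact Finset.sum_mul_sq_le_sq_mul_sq _ _ _
    calc Real.sqrt (∑ i, (convTerm u v x i)^2) ≤ Real.sqrt ((‖u x‖ * frob v x)^2) :=
          Real.sqrt_le_sqrt h2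
      _ = _ := Real.sqrt_sq (mul_nonneg (norm_nonneg _) (frob_nonneg x))
  rw [hw]
  exact mul_le_mul_of_nonneg_right hu (norm_nonneg _)

lemma cont_cs_integrableOn {f : EuclideanSpace ℝ (Fin d) → ℝ} (hf : Continuous f)
    (h : HasCompactSupport f) : IntegrableOn f Ω volume :=
  (hf.integrable_of_hasCompactSupport h).integrableOn

lemma pair_bound (hu : ContDiff ℝ (⊤ : ℕ∞) u) (hv : ContDiff ℝ (⊤ : ℕ∞) v) (hw : ContDiff ℝ (⊤ : ℕ∞) w)
    (h2w : HasCompactSupport w) :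
    |pairL2 Ω (convTerm u v) (fun x i => w x i)| ≤
      ∫ x in Ω, ‖u x‖ * frob v x * ‖w x‖ := by
  have hfc : Continuous (fun x => ∑ i, convTerm u v x i * w x i) := by
    apply continuous_finset_sum
    intro i _
    apply Continuous.mul
    · apply continuous_finset_sum
      intro j _
      exact ((EuclideanSpace.proj j).continuous.comp hu.continuous).mul
        (continuous_partialDeriv hv i j)
    · exact (EuclideanSpace.proj i).continuous.comp hw.continuous
  have hfs : HasCompactSupport (fun x => ∑ i, convTerm u v x i * w x i) := by
    apply HasCompactSupport.intro h2w
    intro x hx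
    have hwx : w x = 0 := image_eq_zero_of_notMem_tsupport hx
    simp [hwx]
  have hgc : Continuous (fun x => ‖u x‖ * frob v x * ‖w x‖) :=
    (hu.continuous.norm.mul (continuous_frob hv)).mul hw.continuous.norm
  have hgs : HasCompactSupport (fun x => ‖u x‖ * frob v x * ‖w x‖) :=
    HasCompactSupport.mul_left (h2w.norm)
  have h1 : |pairL2 Ω (convTerm u v) (fun x i => w x i)| ≤
      ∫ x in Ω, |∑ i, convTerm u v x i * w x i| := by
    rw [pairL2, ← Real.norm_eq_abs]
    refine (norm_integral_le_integral_norm _).trans_eq ?_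
    simp [Real.norm_eq_abs]
  refine h1.trans ?_
  apply integral_mono
  · exact (cont_cs_integrableOn hfc.abs (hfs.abs)).mono_set (subset_refl _)
  · exact cont_cs_integrableOn hgc hgs
  · intro x
    exact conv_pointwise u w x

lemma ofReal_integral_cc {f : EuclideanSpace ℝ (Fin d) → ℝ} (hf : Continuous f)
    (h : HasCompactSupport f) (h0 : ∀ x, 0 ≤ f x) :
    ENNReal.ofReal (∫ x in Ω, f x) = ∫⁻ x in Ω, ENNReal.ofReal (f x) :=
  ofReal_integral_eq_lintegral_ofReal (cont_cs_integrableOn hf h) (ae_of_all _ h0)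

end dsec

section hold
variable {α : Type*} [MeasurableSpace α] {μ : Measure α}

lemma triple_holder {f g h : α → ℝ≥0∞} (hf : Measurable f) (hg : Measurable g)
    (hh : Measurable h) :
    ∫⁻ x, f x * g x * h x ∂μ ≤
      (∫⁻ x, f x ^ (2:ℝ) ∂μ) ^ (1/2 : ℝ) * (∫⁻ x, g x ^ (3:ℝ) ∂μ) ^ (1/3 : ℝ) *
        (∫⁻ x, h x ^ (6:ℝ) ∂μ) ^ (1/6 : ℝ) := by
  have c22 : Real.HolderConjugate 2 2 := Real.HolderConjugate.two_two
  have c33 : Real.HolderConjugate (3/2) 3 := ⟨by norm_num, by norm_num, by norm_num⟩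
  have h1 : ∫⁻ x, f x * g x * h x ∂μ ≤
      (∫⁻ x, f x ^ (2:ℝ) ∂μ) ^ (1/2 : ℝ) * (∫⁻ x, (g x * h x) ^ (2:ℝ) ∂μ) ^ (1/2 : ℝ) := by
    have := ENNReal.lintegral_mul_le_Lp_mul_Lq μ c22 hf.aemeasurable (hg.mul hh).aemeasurable
    simp only [Pi.mul_apply] at this
    simpa [mul_assoc, one_div] using this
  have h2 : ∫⁻ x, (g x * h x) ^ (2:ℝ) ∂μ ≤
      (∫⁻ x, g x ^ (3:ℝ) ∂μ) ^ (2/3 : ℝ) * (∫⁻ x, h x ^ (6:ℝ) ∂μ) ^ (1/3 : ℝ) := by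
    have H := ENNReal.lintegral_mul_le_Lp_mul_Lq μ c33
      (hg.pow_const (2:ℝ)).aemeasurable (hh.pow_const (2:ℝ)).aemeasurable
    simp only [Pi.mul_apply] at H
    have e1 : ∀ x : ℝ≥0∞, (x ^ (2:ℝ)) ^ ((3:ℝ)/2) = x ^ (3:ℝ) := by
      intro x; rw [← ENNReal.rpow_mul]; norm_num
    have e2 : ∀ x : ℝ≥0∞, (x ^ (2:ℝ)) ^ (3:ℝ) = x ^ (6:ℝ) := by
      intro x; rw [← ENNReal.rpow_mul]; norm_num
    have e3 : ∀ x y : ℝ≥0∞, (x * y) ^ (2:ℝ) = x ^ (2:ℝ) * y ^ (2:ℝ) := fun x y =>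
      ENNReal.mul_rpow_of_nonneg _ _ (by norm_num)
    simp only [e1, e2, e3] at H
    calc ∫⁻ x, (g x * h x) ^ (2:ℝ) ∂μ = ∫⁻ x, g x ^ (2:ℝ) * h x ^ (2:ℝ) ∂μ := by
          simp only [e3]
      _ ≤ (∫⁻ x, g x ^ (3:ℝ) ∂μ) ^ (1/(3/2) : ℝ) * (∫⁻ x, h x ^ (6:ℝ) ∂μ) ^ (1/3 : ℝ) := H
      _ = (∫⁻ x, g x ^ (3:ℝ) ∂μ) ^ (2/3 : ℝ) * (∫⁻ x, h x ^ (6:ℝ) ∂μ) ^ (1/3 : ℝ) := by norm_num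
  calc ∫⁻ x, f x * g x * h x ∂μ
      ≤ (∫⁻ x, f x ^ (2:ℝ) ∂μ) ^ (1/2 : ℝ) * (∫⁻ x, (g x * h x) ^ (2:ℝ) ∂μ) ^ (1/2 : ℝ) := h1
    _ ≤ (∫⁻ x, f x ^ (2:ℝ) ∂μ) ^ (1/2 : ℝ) *
        (((∫⁻ x, g x ^ (3:ℝ) ∂μ) ^ (2/3 : ℝ) * (∫⁻ x, h x ^ (6:ℝ) ∂μ) ^ (1/3 : ℝ)) ^ (1/2 : ℝ)) := by
        gcongr
    _ = _ := by
        rw [ENNReal.mul_rpow_of_nonneg _ _ (by norm_num : (0:ℝ) ≤ 1/2), ← ENNReal.rpow_mul,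
          ← ENNReal.rpow_mul, ← mul_assoc]
        norm_num

lemma double_holder {f g : α → ℝ≥0∞} (hf : Measurable f) (hg : Measurable g) :
    ∫⁻ x, f x * g x ∂μ ≤
      (∫⁻ x, f x ^ (2:ℝ) ∂μ) ^ (1/2 : ℝ) * (∫⁻ x, g x ^ (2:ℝ) ∂μ) ^ (1/2 : ℝ) := by
  have c22 : Real.HolderConjugate 2 2 := Real.HolderConjugate.two_two
  have := ENNReal.lintegral_mul_le_Lp_mul_Lq μ c22 hf.aemeasurable hg.aemeasurable
  simp only [Pi.mul_apply] at this
  simpa [one_div] using this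

end hold

lemma sobolev6 (d : ℕ) (hd : d = 2 ∨ d = 3) (Ω : Set (EuclideanSpace ℝ (Fin d)))
    (hΩb : Bornology.IsBounded Ω) :
    ∃ C : ℝ≥0∞, C ≠ ∞ ∧
      ∀ w : EuclideanSpace ℝ (Fin d) → EuclideanSpace ℝ (Fin d),
        ContDiff ℝ (⊤ : ℕ∞) w → HasCompactSupport w → tsupport w ⊆ Ω →
        eLpNorm w 6 volume ≤ C * eLpNorm (fderiv ℝ w) 2 volume := by
  have hrank : Module.finrank ℝ (EuclideanSpace ℝ (Fin d)) = d := finrank_euclideanSpace_fin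
  rcases hd with hd | hd
  · refine ⟨(eLpNormLESNormFDerivOfLeConst (F := EuclideanSpace ℝ (Fin d)) volume Ω (3/2) 6 : ℝ≥0∞)
      * (volume Ω) ^ (1/6 : ℝ), ?_, ?_⟩
    · apply ENNReal.mul_ne_top ENNReal.coe_ne_top
      apply ENNReal.rpow_ne_top_of_nonneg (by norm_num)
      exact hΩb.measure_lt_top.ne
    · intro w hw h2w h3w
      have key := eLpNorm_le_eLpNorm_fderiv_of_le (u := w) (s := Ω) (μ := volume)
        (hw.of_le (by simp)) ((subset_tsupport w).trans h3w) (p := 3/2) (q := 6)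
        (by norm_num [← NNReal.coe_le_coe]) (by rw [hrank, hd]; norm_num [← NNReal.coe_lt_coe])
        (by rw [hrank, hd]; push_cast; norm_num) hΩb
      have hDsupp : Function.support (fderiv ℝ w) ⊆ Ω := (support_fderiv_subset ℝ).trans h3w
      have cmp : eLpNorm (fderiv ℝ w) ((3/2 : ℝ≥0) : ℝ≥0∞) volume ≤
          eLpNorm (fderiv ℝ w) 2 volume * (volume Ω) ^ (1/6 : ℝ) := by
        rw [← eLpNorm_restrict_eq_of_support_subset (f := fderiv ℝ w) hDsupp,
            ← eLpNorm_restrict_eq_of_support_subset (f := fderiv ℝ w) (p := 2) hDsupp]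
        have h32 : ((3/2 : ℝ≥0) : ℝ≥0∞) ≤ 2 := by
          rw [show (2:ℝ≥0∞) = ((2:ℝ≥0):ℝ≥0∞) by norm_cast, ENNReal.coe_le_coe]
          norm_num [← NNReal.coe_le_coe]
        have := eLpNorm_le_eLpNorm_mul_rpow_measure_univ (μ := volume.restrict Ω)
          (q := 2) (f := fderiv ℝ w) h32
          ((hw.fderiv_right (m := (⊤ : ℕ∞)) (by simp)).continuous.aestronglyMeasurable)
        refine this.trans ?_
        rw [Measure.restrict_apply_univ]
        have : 1/((3/2 : ℝ≥0) : ℝ≥0∞).toReal - 1/(2 : ℝ≥0∞).toReal = (1/6 : ℝ) := by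
          rw [ENNReal.coe_toReal]
          norm_num
        rw [this]
      calc eLpNorm w ((6 : ℝ≥0) : ℝ≥0∞) volume
          ≤ (eLpNormLESNormFDerivOfLeConst (F := EuclideanSpace ℝ (Fin d)) volume Ω (3/2) 6 : ℝ≥0∞) *
            eLpNorm (fderiv ℝ w) ((3/2 : ℝ≥0) : ℝ≥0∞) volume := key
        _ ≤ (eLpNormLESNormFDerivOfLeConst (F := EuclideanSpace ℝ (Fin d)) volume Ω (3/2) 6 : ℝ≥0∞) *
            (eLpNorm (fderiv ℝ w) 2 volume * (volume Ω) ^ (1/6 : ℝ)) :=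
            mul_le_mul_right cmp _
        _ = _ := by ring
  · refine ⟨(eLpNormLESNormFDerivOfLeConst (F := EuclideanSpace ℝ (Fin d)) volume Ω 2 6 : ℝ≥0∞),
      ENNReal.coe_ne_top, ?_⟩
    intro w hw h2w h3w
    have key := eLpNorm_le_eLpNorm_fderiv_of_le (u := w) (s := Ω) (μ := volume)
      (hw.of_le (by simp)) ((subset_tsupport w).trans h3w) (p := 2) (q := 6)
      (by norm_num) (by rw [hrank, hd]; norm_num [← NNReal.coe_lt_coe])
      (by rw [hrank, hd]; push_cast; norm_num) hΩb
    exact_mod_cast key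

/-- Lemma 2.1, third bound:
`|b*(u,v,w)| ≤ M ‖u‖ (‖∇v‖_{L³} + ‖v‖_{L^∞}) ‖∇w‖` for smooth compactly
supported vector fields on a bounded open set `Ω ⊆ ℝ^d`, `d = 2` or `3`. -/
theorem bStar_bound_L3_Linf (d : ℕ) (hd : d = 2 ∨ d = 3)
    (Ω : Set (EuclideanSpace ℝ (Fin d))) (hΩo : IsOpen Ω)
    (hΩb : Bornology.IsBounded Ω) :
    ∃ M : ℝ, 0 < M ∧
      ∀ u v w : EuclideanSpace ℝ (Fin d) → EuclideanSpace ℝ (Fin d),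
        ContDiff ℝ (⊤ : ℕ∞) u → HasCompactSupport u → tsupport u ⊆ Ω →
        ContDiff ℝ (⊤ : ℕ∞) v → HasCompactSupport v → tsupport v ⊆ Ω →
        ContDiff ℝ (⊤ : ℕ∞) w → HasCompactSupport w → tsupport w ⊆ Ω →
        |bStar Ω u v w| ≤
          M * normL2 Ω u * (gradNormL3 Ω v + normLinf Ω v) * gradNormL2 Ω w := by
  obtain ⟨C, hCt, hC⟩ := sobolev6 d hd Ω hΩb
  refine ⟨C.toReal + 1, by positivity, ?_⟩
  intro u v w hu h2u h3u hv h2v h3v hw h2w h3w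
  by_cases hmu0 : volume Ω = 0
  · have hres : volume.restrict Ω = 0 := Measure.restrict_eq_zero.mpr hmu0
    have hb : bStar Ω u v w = 0 := by simp [bStar, pairL2, hres]
    have hn : normL2 Ω u = 0 := by simp [normL2, hres]
    rw [hb, hn, abs_zero]
    simp
  have hmune : (volume.restrict Ω : Measure (EuclideanSpace ℝ (Fin d))) ≠ 0 :=
    fun h => hmu0 (Measure.restrict_eq_zero.mp h)
  -- abbreviations
  set F : EuclideanSpace ℝ (Fin d) → ℝ≥0∞ := fun x => ENNReal.ofReal ‖u x‖ with hFdef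
  set GV : EuclideanSpace ℝ (Fin d) → ℝ≥0∞ := fun x => ENNReal.ofReal (frob v x) with hGVdef
  set GW : EuclideanSpace ℝ (Fin d) → ℝ≥0∞ := fun x => ENNReal.ofReal (frob w x) with hGWdef
  set W : EuclideanSpace ℝ (Fin d) → ℝ≥0∞ := fun x => ENNReal.ofReal ‖w x‖ with hWdef
  set V : EuclideanSpace ℝ (Fin d) → ℝ≥0∞ := fun x => ENNReal.ofReal ‖v x‖ with hVdef
  have mF : Measurable F := (hu.continuous.norm).measurable.ennreal_ofReal
  have mGV : Measurable GV := (continuous_frob hv).measurable.ennreal_ofReal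
  have mGW : Measurable GW := (continuous_frob hw).measurable.ennreal_ofReal
  have mW : Measurable W := (hw.continuous.norm).measurable.ennreal_ofReal
  have mV : Measurable V := (hv.continuous.norm).measurable.ennreal_ofReal
  -- the two real majorant integrals
  have hI1nn : 0 ≤ ∫ x in Ω, ‖u x‖ * frob v x * ‖w x‖ :=
    integral_nonneg fun x => mul_nonneg (mul_nonneg (norm_nonneg _) (frob_nonneg _)) (norm_nonneg _)
  have hI2nn : 0 ≤ ∫ x in Ω, ‖u x‖ * frob w x * ‖v x‖ :=
    integral_nonneg fun x => mul_nonneg (mul_nonneg (norm_nonneg _) (frob_nonneg _)) (norm_nonneg _)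
  have hbs : |bStar Ω u v w| ≤
      (∫ x in Ω, ‖u x‖ * frob v x * ‖w x‖) + (∫ x in Ω, ‖u x‖ * frob w x * ‖v x‖) := by
    have hp1 := pair_bound (Ω := Ω) hu hv hw h2w
    have hp2 := pair_bound (Ω := Ω) hu hw hv h2v
    have habs : |bStar Ω u v w| ≤
        1/2 * |pairL2 Ω (convTerm u v) (fun x i => w x i)| +
        1/2 * |pairL2 Ω (convTerm u w) (fun x i => v x i)| := by
      rw [bStar]
      refine (abs_sub _ _).trans ?_
      rw [abs_mul, abs_mul, abs_of_pos (show (0:ℝ) < 1/2 by norm_num)]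
    have h1 := abs_nonneg (pairL2 Ω (convTerm u v) (fun x i => w x i))
    have h2 := abs_nonneg (pairL2 Ω (convTerm u w) (fun x i => v x i))
    linarith
  -- pass to lintegrals
  have hoR1 : ENNReal.ofReal (∫ x in Ω, ‖u x‖ * frob v x * ‖w x‖)
      = ∫⁻ x in Ω, F x * GV x * W x := by
    rw [ofReal_integral_cc (f := fun x => ‖u x‖ * frob v x * ‖w x‖) ((hu.continuous.norm.mul (continuous_frob hv)).mul hw.continuous.norm)
      (HasCompactSupport.mul_left (h2w.norm))
      (fun x => mul_nonneg (mul_nonneg (norm_nonneg _) (frob_nonneg _)) (norm_nonneg _))]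
    apply lintegral_congr
    intro x
    rw [ENNReal.ofReal_mul (mul_nonneg (norm_nonneg _) (frob_nonneg _)),
      ENNReal.ofReal_mul (norm_nonneg _)]
  have hoR2 : ENNReal.ofReal (∫ x in Ω, ‖u x‖ * frob w x * ‖v x‖)
      = ∫⁻ x in Ω, F x * GW x * V x := by
    rw [ofReal_integral_cc (f := fun x => ‖u x‖ * frob w x * ‖v x‖) ((hu.continuous.norm.mul (continuous_frob hw)).mul hv.continuous.norm)
      (HasCompactSupport.mul_left (h2v.norm))
      (fun x => mul_nonneg (mul_nonneg (norm_nonneg _) (frob_nonneg _)) (norm_nonneg _))]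
    apply lintegral_congr
    intro x
    rw [ENNReal.ofReal_mul (mul_nonneg (norm_nonneg _) (frob_nonneg _)),
      ENNReal.ofReal_mul (norm_nonneg _)]
  -- conversions of the norms
  have hNU : (∫⁻ x in Ω, F x ^ (2:ℝ)) ^ (1/2:ℝ) = ENNReal.ofReal (normL2 Ω u) := by
    have hint : ∀ i : Fin d, IntegrableOn (fun x => (u x i)^2) Ω volume := fun i =>
      cont_cs_integrableOn (((EuclideanSpace.proj i).continuous.comp hu.continuous).pow 2)
        (h2u.comp_left (g := fun y : EuclideanSpace ℝ (Fin d) => (y i)^2) (by simp))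
    have hsum : ∑ i, ∫ x in Ω, (u x i)^2 = ∫ x in Ω, ‖u x‖^2 := by
      rw [← integral_finset_sum _ (fun i _ => hint i)]
      refine integral_congr_ae (Filter.Eventually.of_forall fun x => ?_)
      exact (norm_sq_eq_sum (u x)).symm
    rw [normL2, hsum, Real.sqrt_eq_rpow,
      ← ENNReal.ofReal_rpow_of_nonneg (integral_nonneg fun x => by positivity) (by norm_num),
      ofReal_integral_cc (f := fun x => ‖u x‖ ^ 2) (hu.continuous.norm.pow 2)
        ((h2u.norm).comp_left (g := fun t : ℝ => t^2) (by simp)) (fun x => by positivity)]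
    congr 1
    apply lintegral_congr
    intro x
    rw [ENNReal.ofReal_pow (norm_nonneg _), ← ENNReal.rpow_natCast (ENNReal.ofReal ‖u x‖) 2]
    norm_num
    simp only [hFdef, ofReal_norm]
  have hGW2 : (∫⁻ x in Ω, GW x ^ (2:ℝ)) ^ (1/2:ℝ) = ENNReal.ofReal (gradNormL2 Ω w) := by
    have hintij : ∀ i j : Fin d, IntegrableOn (fun x => (partialDeriv' w x i j)^2) Ω volume :=
      fun i j => cont_cs_integrableOn ((continuous_partialDeriv hw i j).pow 2)
        ((pd_cs h2w i j).comp_left (g := fun t : ℝ => t^2) (by simp))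
    have hsum : ∑ i, ∑ j, ∫ x in Ω, (partialDeriv' w x i j)^2 = ∫ x in Ω, (frob w x)^2 := by
      have hstep : ∀ i : Fin d, ∑ j, ∫ x in Ω, (partialDeriv' w x i j)^2
          = ∫ x in Ω, ∑ j, (partialDeriv' w x i j)^2 := fun i =>
        (integral_finset_sum _ (fun j _ => hintij i j)).symm
      simp_rw [hstep]
      rw [← integral_finset_sum _ (fun i _ => integrable_finset_sum _ (fun j _ => hintij i j))]
      refine integral_congr_ae (Filter.Eventually.of_forall fun x => ?_)
      simp only [frob]
      rw [Real.sq_sqrt (by positivity)]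
    rw [gradNormL2, hsum, Real.sqrt_eq_rpow,
      ← ENNReal.ofReal_rpow_of_nonneg (integral_nonneg fun x => by positivity) (by norm_num),
      ofReal_integral_cc (f := fun x => frob w x ^ 2) ((continuous_frob hw).pow 2)
        ((frob_support h2w).comp_left (g := fun t : ℝ => t^2) (by simp))
        (fun x => by positivity)]
    congr 1
    apply lintegral_congr
    intro x
    rw [ENNReal.ofReal_pow (frob_nonneg _), ← ENNReal.rpow_natCast (GW x) 2]
    norm_num
  have hGV3 : (∫⁻ x in Ω, GV x ^ (3:ℝ)) ^ (1/3:ℝ) = ENNReal.ofReal (gradNormL3 Ω v) := by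
    have hdefe : gradNormL3 Ω v = (∫ x in Ω, (frob v x)^3) ^ ((1:ℝ)/3) := rfl
    rw [hdefe,
      ← ENNReal.ofReal_rpow_of_nonneg
        (integral_nonneg fun x => pow_nonneg (frob_nonneg _) 3) (by norm_num),
      ofReal_integral_cc (f := fun x => frob v x ^ 3) ((continuous_frob hv).pow 3)
        ((frob_support h2v).comp_left (g := fun t : ℝ => t^3) (by simp))
        (fun x => pow_nonneg (frob_nonneg _) 3)]
    rw [show ((1:ℝ)/3) = (1/3 : ℝ) by norm_num]
    congr 1
    apply lintegral_congr
    intro x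
    rw [ENNReal.ofReal_pow (frob_nonneg _), ← ENNReal.rpow_natCast (GV x) 3]
    norm_num
  -- Sobolev for w
  have hNW6 : (∫⁻ x in Ω, W x ^ (6:ℝ)) ^ (1/6:ℝ) ≤ C * ENNReal.ofReal (gradNormL2 Ω w) := by
    have heq : (∫⁻ x in Ω, W x ^ (6:ℝ)) ^ (1/6:ℝ) = eLpNorm w 6 (volume.restrict Ω) := by
      rw [eLpNorm_eq_lintegral_rpow_enorm_toReal (p := 6) (by norm_num) (by norm_num)]
      simp only [ENNReal.toReal_ofNat]
      congr 1
      apply lintegral_congr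
      intro x
      simp only [hWdef]
      rw [ofReal_norm]
    have hsup : Function.support w ⊆ Ω := (subset_tsupport w).trans h3w
    rw [heq, eLpNorm_restrict_eq_of_support_subset hsup]
    refine (hC w hw h2w h3w).trans ?_
    apply mul_le_mul_right
    have hDsupp : Function.support (fderiv ℝ w) ⊆ Ω := (support_fderiv_subset ℝ).trans h3w
    rw [← eLpNorm_restrict_eq_of_support_subset (f := fderiv ℝ w) hDsupp,
      eLpNorm_eq_lintegral_rpow_enorm_toReal (p := 2) (by norm_num) (by norm_num), ← hGW2]
    simp only [ENNReal.toReal_ofNat]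
    apply ENNReal.rpow_le_rpow _ (by norm_num)
    apply lintegral_mono
    intro x
    apply ENNReal.rpow_le_rpow _ (by norm_num)
    rw [← ofReal_norm]
    exact ENNReal.ofReal_le_ofReal (opNorm_le_frob x)
  -- essential supremum facts for v
  have hveq : (fun x : EuclideanSpace ℝ (Fin d) => Real.sqrt (∑ i, (v x i)^2))
      = fun x => ‖v x‖ := by
    funext x
    rw [← norm_sq_eq_sum, Real.sqrt_sq (norm_nonneg _)]
  have hbd : Filter.IsBoundedUnder (· ≤ ·) (ae (volume.restrict Ω)) (fun x => ‖v x‖) := by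
    obtain ⟨Cb, hCb⟩ := hv.continuous.bounded_above_of_compact_support h2v
    exact Filter.isBoundedUnder_of ⟨Cb, fun x => hCb x⟩
  have hlinf_eq : normLinf Ω v = essSup (fun x => ‖v x‖) (volume.restrict Ω) := by
    rw [normLinf, hveq]
  have hle : ∀ᵐ y ∂(volume.restrict Ω), ‖v y‖ ≤ normLinf Ω v := by
    rw [hlinf_eq]
    exact ae_le_essSup hbd
  have hlinf0 : 0 ≤ normLinf Ω v := by
    by_contra hneg
    push_neg at hneg
    have hfalse : ∀ᵐ y ∂(volume.restrict Ω), False :=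
      hle.mono fun y hy => absurd (lt_of_le_of_lt hy hneg) (not_lt.mpr (norm_nonneg _))
    have : (ae (volume.restrict Ω)) = ⊥ := Filter.eventually_false_iff_eq_bot.mp hfalse
    exact hmune (ae_eq_bot.mp this)
  have hLV : essSup V (volume.restrict Ω) ≤ ENNReal.ofReal (normLinf Ω v) := by
    refine essSup_le_of_ae_le _ ?_
    exact hle.mono fun y hy => ENNReal.ofReal_le_ofReal hy
  -- second term estimate
  have ht2 : ∫⁻ x in Ω, F x * GW x * V x ≤
      ((∫⁻ x in Ω, F x ^ (2:ℝ)) ^ (1/2:ℝ) * (∫⁻ x in Ω, GW x ^ (2:ℝ)) ^ (1/2:ℝ)) *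
        essSup V (volume.restrict Ω) := by
    calc ∫⁻ x in Ω, F x * GW x * V x
        ≤ ∫⁻ x in Ω, (F x * GW x) * essSup V (volume.restrict Ω) := by
          refine lintegral_mono_ae ?_
          exact (ENNReal.ae_le_essSup (μ := volume.restrict Ω) V).mono
            fun x hx => mul_le_mul_right hx _
      _ = (∫⁻ x in Ω, F x * GW x) * essSup V (volume.restrict Ω) :=
          lintegral_mul_const _ (mF.mul mGW)
      _ ≤ _ := mul_le_mul_left (double_holder mF mGW) _
  -- main chain in ℝ≥0∞
  have g3nn : 0 ≤ gradNormL3 Ω v :=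
    Real.rpow_nonneg (integral_nonneg fun x => pow_nonneg (Real.sqrt_nonneg _) 3) _
  have nl2nn : 0 ≤ normL2 Ω u := Real.sqrt_nonneg _
  have g2nn : 0 ≤ gradNormL2 Ω w := Real.sqrt_nonneg _
  have main : ENNReal.ofReal |bStar Ω u v w| ≤
      ENNReal.ofReal ((C.toReal + 1) * normL2 Ω u * (gradNormL3 Ω v + normLinf Ω v) *
        gradNormL2 Ω w) := by
    have hRHS : ENNReal.ofReal ((C.toReal + 1) * normL2 Ω u *
          (gradNormL3 Ω v + normLinf Ω v) * gradNormL2 Ω w)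
        = (C + 1) * (ENNReal.ofReal (normL2 Ω u) *
          (ENNReal.ofReal (gradNormL3 Ω v) + ENNReal.ofReal (normLinf Ω v)) *
          ENNReal.ofReal (gradNormL2 Ω w)) := by
      rw [ENNReal.ofReal_mul (by positivity), ENNReal.ofReal_mul (by positivity),
        ENNReal.ofReal_mul (by positivity), ENNReal.ofReal_add g3nn hlinf0,
        ENNReal.ofReal_add C.toReal_nonneg zero_le_one, ENNReal.ofReal_toReal hCt,
        ENNReal.ofReal_one]
      ring
    rw [hRHS]
    calc ENNReal.ofReal |bStar Ω u v w|
        ≤ ENNReal.ofReal ((∫ x in Ω, ‖u x‖ * frob v x * ‖w x‖) +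
            (∫ x in Ω, ‖u x‖ * frob w x * ‖v x‖)) := ENNReal.ofReal_le_ofReal hbs
      _ = (∫⁻ x in Ω, F x * GV x * W x) + (∫⁻ x in Ω, F x * GW x * V x) := by
          rw [ENNReal.ofReal_add hI1nn hI2nn, hoR1, hoR2]
      _ ≤ ((∫⁻ x in Ω, F x ^ (2:ℝ)) ^ (1/2:ℝ) * (∫⁻ x in Ω, GV x ^ (3:ℝ)) ^ (1/3:ℝ) *
            (∫⁻ x in Ω, W x ^ (6:ℝ)) ^ (1/6:ℝ)) +
          ((∫⁻ x in Ω, F x ^ (2:ℝ)) ^ (1/2:ℝ) * (∫⁻ x in Ω, GW x ^ (2:ℝ)) ^ (1/2:ℝ)) *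
            essSup V (volume.restrict Ω) :=
          add_le_add (triple_holder mF mGV mW) ht2
      _ ≤ (ENNReal.ofReal (normL2 Ω u) * ENNReal.ofReal (gradNormL3 Ω v) *
            (C * ENNReal.ofReal (gradNormL2 Ω w))) +
          (ENNReal.ofReal (normL2 Ω u) * ENNReal.ofReal (gradNormL2 Ω w)) *
            ENNReal.ofReal (normLinf Ω v) := by
          rw [← hNU, ← hGV3, ← hGW2]
          have hNW6' := hNW6
          rw [← hGW2] at hNW6'
          exact add_le_add (mul_le_mul_right hNW6' _) (mul_le_mul_right hLV _)
      _ ≤ (C + 1) * (ENNReal.ofReal (normL2 Ω u) *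
            (ENNReal.ofReal (gradNormL3 Ω v) + ENNReal.ofReal (normLinf Ω v)) *
            ENNReal.ofReal (gradNormL2 Ω w)) := by
          have expand : (C + 1) * (ENNReal.ofReal (normL2 Ω u) *
              (ENNReal.ofReal (gradNormL3 Ω v) + ENNReal.ofReal (normLinf Ω v)) *
              ENNReal.ofReal (gradNormL2 Ω w))
            = (C + 1) * (ENNReal.ofReal (normL2 Ω u) * ENNReal.ofReal (gradNormL3 Ω v) *
                ENNReal.ofReal (gradNormL2 Ω w)) +
              (C + 1) * (ENNReal.ofReal (normL2 Ω u) * ENNReal.ofReal (normLinf Ω v) *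
                ENNReal.ofReal (gradNormL2 Ω w)) := by ring
          rw [expand]
          apply add_le_add
          · calc ENNReal.ofReal (normL2 Ω u) * ENNReal.ofReal (gradNormL3 Ω v) *
                (C * ENNReal.ofReal (gradNormL2 Ω w))
                = C * (ENNReal.ofReal (normL2 Ω u) * ENNReal.ofReal (gradNormL3 Ω v) *
                  ENNReal.ofReal (gradNormL2 Ω w)) := by ring
              _ ≤ _ := mul_le_mul_left le_self_add _
          · calc ENNReal.ofReal (normL2 Ω u) * ENNReal.ofReal (gradNormL2 Ω w) *
                ENNReal.ofReal (normLinf Ω v)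
                = 1 * (ENNReal.ofReal (normL2 Ω u) * ENNReal.ofReal (normLinf Ω v) *
                  ENNReal.ofReal (gradNormL2 Ω w)) := by ring
              _ ≤ _ := mul_le_mul_left le_add_self _
  have hRHSnn : 0 ≤ (C.toReal + 1) * normL2 Ω u * (gradNormL3 Ω v + normLinf Ω v) *
      gradNormL2 Ω w := by
    exact mul_nonneg (mul_nonneg (mul_nonneg (by positivity) nl2nn)
      (add_nonneg g3nn hlinf0)) g2nn
  exact (ENNReal.ofReal_le_ofReal_iff hRHSnn).mp main
end
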